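/- Let V be a finite-dimensional real vector space equipped with null data (γ, ℓ, ℓ⁽²⁾, P, n, n⁽²⁾ = 0) satisfying the four contraction identities, and let S ⊂ V be a codimension-one subspace with n ∉ S, so that h := γ restricted to S × S is nondegenerate. Set ℓ_∥ := ℓ|_S, let ℓ_∥^♯ ∈ S be the vector with h(ℓ_∥^♯, ·) = ℓ_∥, and set ℓ⁽²⁾_∥ := ℓ_∥(ℓ_∥^♯). Let Y be any symmetric bilinear form on V and define κ := −Y(n,n). Then tr_P Y = tr_h Y_∥ − 2·Y(n, ℓ_∥^♯) + κ·(ℓ⁽²⁾ − ℓ⁽²⁾_∥), where Y_∥ is the restriction of Y to S × S. -/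

import Mathlib

/-!
Split `V = S ⊕ ℝ n` and let `θ` be the coordinate along `n`: then `tr_P Y` is the trace on `S` of
the `S`-component of `X ↦ P(Y(X,·),·)`, plus the `n`-coefficient `θ(P(Y(n,·),·))`.
Since `γ(·,n) = 0` and `ℓ(n) = 1`, every covector splits as `α = γ(w,·) + α(n) ℓ`, where `w ∈ S`
solves `h(w,·) = (α - α(n) ℓ)|_S`, and the contraction identities turn this into
`P(α,·) = w - (ℓ(w) + α(n) ℓ⁽²⁾) n`. For `α = Y(X,·)` with `X ∈ S` this gives
`w = F X - Y(X,n) ℓ_∥^♯`, contributing `tr_h Y_∥ - Y(n,ℓ_∥^♯)`; for `α = Y(n,·)` the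
`n`-coefficient is `-ℓ(w) - Y(n,n) ℓ⁽²⁾ = -Y(n,ℓ_∥^♯) + Y(n,n) ℓ⁽²⁾_∥ - Y(n,n) ℓ⁽²⁾`.
-/

open Module

/-- The vector of `V` corresponding to `P(ρ,·) ∈ V**`, via the canonical
identification `V ≅ V**`. -/
noncomputable def Pvec {V : Type*} [AddCommGroup V] [Module ℝ V] [FiniteDimensional ℝ V]
    (P : LinearMap.BilinForm ℝ (Module.Dual ℝ V)) (ρ : Module.Dual ℝ V) : V :=
  (Module.evalEquiv ℝ V).symm (P ρ)

/-- `tr_P T`: the trace of the endomorphism `X ↦ P(T(X,·),·)` of `V`. -/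
noncomputable def trP {V : Type*} [AddCommGroup V] [Module ℝ V] [FiniteDimensional ℝ V]
    (P : LinearMap.BilinForm ℝ (Module.Dual ℝ V)) (T : LinearMap.BilinForm ℝ V) : ℝ :=
  LinearMap.trace ℝ V ((Module.evalEquiv ℝ V).symm.toLinearMap ∘ₗ P ∘ₗ T)

open LinearMap (BilinForm trace)

namespace Submodule

variable {K V : Type*} [Field K] [AddCommGroup V] [Module K V] {S : Submodule K V} {n : V}

theorem isCompl_span_singleton_of_finrank_add_one [FiniteDimensional K V] (hnS : n ∉ S)
    (hcodim : finrank K S + 1 = finrank K V) : IsCompl S (K ∙ n) := by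
  have hn : n ≠ 0 := fun h ↦ hnS (h ▸ S.zero_mem)
  refine (isCompl_iff_disjoint S _ ?_).2 (disjoint_span_singleton_of_notMem hnS)
  rw [finrank_span_singleton hn, hcodim]

theorem linearMap_ext_of_isCompl_span_singleton {M : Type*} [AddCommGroup M] [Module K M]
    (h : IsCompl S (K ∙ n)) {f g : V →ₗ[K] M} (hS : ∀ s ∈ S, f s = g s) (hn : f n = g n) :
    f = g :=
  LinearMap.ext_on_codisjoint h.codisjoint (fun s hs ↦ hS s hs)
    (LinearMap.eqOn_span' (Set.eqOn_singleton.2 hn))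

theorem exists_dual_eq_zero_on_apply_eq_one (h : IsCompl S (K ∙ n)) (hn : n ≠ 0) :
    ∃ θ : Dual K V, (∀ s ∈ S, θ s = 0) ∧ θ n = 1 :=
  ⟨LinearMap.ofIsCompl h 0 (LinearEquiv.coord K V n hn).toLinearMap,
    fun s hs ↦ LinearMap.ofIsCompl_apply_left h (⟨s, hs⟩ : S),
    (LinearMap.ofIsCompl_apply_right h ⟨n, mem_span_singleton_self n⟩).trans
      (LinearEquiv.coord_self K V n hn)⟩

end Submodule

namespace LinearMap

variable {K V : Type*} [Field K] [AddCommGroup V] [Module K V] [FiniteDimensional K V]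
  {S : Submodule K V} {n : V}

theorem trace_eq_trace_projectionOnto_add (h : IsCompl S (K ∙ n)) {θ : Dual K V}
    (hθS : ∀ s ∈ S, θ s = 0) (hθn : θ n = 1) (E : V →ₗ[K] V) :
    trace K V E = trace K S (S.projectionOnto _ h ∘ₗ E ∘ₗ S.subtype) + θ (E n) := by
  have hid : S.subtype ∘ₗ S.projectionOnto _ h + θ.smulRight n = id :=
    Submodule.linearMap_ext_of_isCompl_span_singleton h
      (fun s hs ↦ by simp [hθS s hs, Submodule.projectionOnto_apply_left h ⟨s, hs⟩])
      (by simp [hθn, Submodule.projectionOnto_apply_of_mem_right h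
        (Submodule.mem_span_singleton_self n)])
  have hE : E ∘ₗ θ.smulRight n = θ.smulRight (E n) := by ext; simp
  calc trace K V E
      = trace K V ((E ∘ₗ S.subtype) ∘ₗ S.projectionOnto _ h + E ∘ₗ θ.smulRight n) := by
        rw [comp_assoc, ← comp_add, hid, comp_id]
    _ = _ := by rw [map_add, trace_comp_comm', hE, trace_smulRight]

end LinearMap

namespace LinearMap.BilinForm

variable {K M : Type*} [Field K] [AddCommGroup M] [Module K M] [FiniteDimensional K M]
  {B : BilinForm K M}

theorem existsUnique_apply_eq_of_nondegenerate (hB : B.Nondegenerate) (f : Dual K M) :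
    ∃! x, ∀ y, B x y = f y :=
  ⟨(B.toDual hB).symm f, apply_toDual_symm_apply f, fun _ hx ↦
    (B.toDual hB).eq_symm_apply.2 (LinearMap.ext hx)⟩

theorem existsUnique_comp_eq_of_nondegenerate (hB : B.Nondegenerate) (C : BilinForm K M) :
    ∃! F : M →ₗ[K] M, ∀ x y, B (F x) y = C x y :=
  ⟨C.symmCompOfNondegenerate B hB, fun x y ↦ symmCompOfNondegenerate_left_apply C hB y x,
    fun F hF ↦ B.compLeft_injective hB <| ext₂ fun x y ↦ by
      rw [compLeft_apply, compLeft_apply, hF, symmCompOfNondegenerate_left_apply]⟩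

end LinearMap.BilinForm

section NullData

variable {V : Type*} [AddCommGroup V] [Module ℝ V] [FiniteDimensional ℝ V]
  {γ : BilinForm ℝ V} {ℓ : Dual ℝ V} {ℓ2 : ℝ} {P : BilinForm ℝ (Dual ℝ V)} {n : V}
  {S : Submodule ℝ V}

variable (P) in
noncomputable def Pvecₗ : Dual ℝ V →ₗ[ℝ] V :=
  (evalEquiv ℝ V).symm.toLinearMap ∘ₗ P

theorem Pvecₗ_apply (ρ : Dual ℝ V) : Pvecₗ P ρ = Pvec P ρ := rfl

theorem trP_eq_trace_Pvecₗ_comp (T : BilinForm ℝ V) : trP P T = trace ℝ V (Pvecₗ P ∘ₗ T) := rfl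

theorem nondegenerate_restrict_of_isCompl (hγsym : ∀ X Y : V, γ X Y = γ Y X)
    (hγn : ∀ v, γ v n = 0) (h4 : ∀ X : V, Pvec P (γ X) + ℓ X • n = X)
    (h : IsCompl S (ℝ ∙ n)) : (γ.restrict S).Nondegenerate := by
  refine (LinearMap.IsRefl.nondegenerate_iff_separatingLeft (B := γ.restrict S)
    fun x y hxy ↦ (hγsym y x).trans hxy).2 fun x hx ↦ ?_
  have hγx : γ x = 0 := Submodule.linearMap_ext_of_isCompl_span_singleton h
    (fun s hs ↦ hx ⟨s, hs⟩) (hγn x)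
  have hx_line : ℓ x • n = (x : V) := by
    simpa [hγx, ← Pvecₗ_apply] using h4 x
  exact Subtype.ext <| Submodule.disjoint_def.1 h.disjoint x x.2
    (hx_line ▸ Submodule.smul_mem _ _ (Submodule.mem_span_singleton_self n))

theorem Pvec_eq_sub_smul (hγn : ∀ v, γ v n = 0) (hℓn : ℓ n = 1)
    (h3 : Pvec P ℓ + ℓ2 • n = 0) (h4 : ∀ X : V, Pvec P (γ X) + ℓ X • n = X)
    (h : IsCompl S (ℝ ∙ n)) {α : Dual ℝ V} {w : V} (hw : ∀ y ∈ S, γ w y = α y - α n * ℓ y) :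
    Pvec P α = w - (ℓ w + α n * ℓ2) • n := by
  have hα : α = γ w + α n • ℓ := Submodule.linearMap_ext_of_isCompl_span_singleton h
    (fun y hy ↦ by simp [hw y hy]) (by simp [hγn, hℓn])
  rw [← Pvecₗ_apply, hα, map_add, map_smul, Pvecₗ_apply, Pvecₗ_apply,
    eq_sub_of_add_eq (h4 w), eq_neg_of_add_eq_zero_left h3]
  simp only [LinearMap.add_apply, LinearMap.smul_apply, hγn, hℓn, smul_eq_mul]
  module

end NullData

theorem trP_Y_decomposition_general {V : Type*} [AddCommGroup V] [Module ℝ V]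
    [FiniteDimensional ℝ V]
    (γ : LinearMap.BilinForm ℝ V) (hγsym : ∀ X Y : V, γ X Y = γ Y X)
    (ℓ : Module.Dual ℝ V) (ℓ2 : ℝ)
    (P : LinearMap.BilinForm ℝ (Module.Dual ℝ V))
    (n : V) (n2 : ℝ) (hn2 : n2 = 0)
    (h1 : γ n + n2 • ℓ = 0)
    (h2 : ℓ n + n2 * ℓ2 = 1)
    (h3 : Pvec P ℓ + ℓ2 • n = 0)
    (h4 : ∀ X : V, Pvec P (γ X) + ℓ X • n = X)
    (S : Submodule ℝ V)
    (hcodim : Module.finrank ℝ S + 1 = Module.finrank ℝ V) (hnS : n ∉ S)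
    (Y : LinearMap.BilinForm ℝ V) (hYsym : ∀ X Z : V, Y X Z = Y Z X) :
    (∃! lsharp : S, ∀ x : S, γ (lsharp : V) (x : V) = ℓ (x : V)) ∧
    (∃! F : S →ₗ[ℝ] S, ∀ x y : S, γ (F x : V) (y : V) = Y (x : V) (y : V)) ∧
    (∀ (lsharp : S), (∀ x : S, γ (lsharp : V) (x : V) = ℓ (x : V)) →
      ∀ F : S →ₗ[ℝ] S, (∀ x y : S, γ (F x : V) (y : V) = Y (x : V) (y : V)) →
        trP P Y = LinearMap.trace ℝ S F - 2 * Y n (lsharp : V)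
          + (-(Y n n)) * (ℓ2 - ℓ (lsharp : V))) := by
  subst hn2
  have hγn : ∀ v, γ v n = 0 := fun v ↦ by simpa [hγsym v n] using congr($h1 v)
  have hℓn : ℓ n = 1 := by simpa using h2
  have hcompl := Submodule.isCompl_span_singleton_of_finrank_add_one hnS hcodim
  have hnd := nondegenerate_restrict_of_isCompl hγsym hγn h4 hcompl
  refine ⟨BilinForm.existsUnique_apply_eq_of_nondegenerate hnd (ℓ ∘ₗ S.subtype),
    BilinForm.existsUnique_comp_eq_of_nondegenerate hnd (Y.restrict S),
    fun lsharp hlsharp F hF ↦ ?_⟩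
  obtain ⟨θ, hθS, hθn⟩ := Submodule.exists_dual_eq_zero_on_apply_eq_one hcompl
    fun h ↦ hnS (h ▸ S.zero_mem)
  have htan : S.projectionOnto _ hcompl ∘ₗ (Pvecₗ P ∘ₗ Y) ∘ₗ S.subtype
      = F - (Y n ∘ₗ S.subtype).smulRight lsharp := by
    ext x
    have hw : ∀ y ∈ S, γ (F x - Y x n • lsharp : S) y = Y x y - Y x n * ℓ y := fun y hy ↦ by
      simp [hF x ⟨y, hy⟩, hlsharp ⟨y, hy⟩]
    simp [Pvecₗ_apply, Pvec_eq_sub_smul hγn hℓn h3 h4 hcompl hw,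
      Submodule.projectionOnto_apply_left,
      Submodule.projectionOnto_apply_of_mem_right hcompl (Submodule.mem_span_singleton_self n),
      hYsym x n]
  obtain ⟨w, hw, -⟩ :=
    BilinForm.existsUnique_apply_eq_of_nondegenerate hnd ((Y n - Y n n • ℓ) ∘ₗ S.subtype)
  have hℓw : ℓ w = Y n lsharp - Y n n * ℓ lsharp := by
    rw [← hlsharp w, hγsym]; simpa using hw lsharp
  have hnormal : θ ((Pvecₗ P ∘ₗ Y) n) = -(ℓ w + Y n n * ℓ2) := by
    rw [LinearMap.comp_apply, Pvecₗ_apply,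
      Pvec_eq_sub_smul hγn hℓn h3 h4 hcompl fun y hy ↦ by simpa using hw ⟨y, hy⟩]
    simp [hθS w w.2, hθn]
  rw [trP_eq_trace_Pvecₗ_comp, LinearMap.trace_eq_trace_projectionOnto_add hcompl hθS hθn,
    htan, map_sub, LinearMap.trace_smulRight, hnormal, hℓw]
  simp only [LinearMap.comp_apply, Submodule.subtype_apply]
  ring

/-- For null hypersurface data with a transverse codimension-one subspace `S`:
for any symmetric bilinear form `Y`, with `κ = −Y(n,n)`,
`tr_P Y = tr_h Y_∥ − 2·Y(n, ℓ_∥^♯) + κ·(ℓ⁽²⁾ − ℓ⁽²⁾_∥)`, where `ℓ_∥^♯ ∈ S` is the vector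
with `h(ℓ_∥^♯,·) = ℓ|_S`, `ℓ⁽²⁾_∥ = ℓ(ℓ_∥^♯)`, and `tr_h Y_∥` is the trace of the
endomorphism `F = h⁻¹ ∘ Y_∥` of `S`. -/
theorem trP_Y_decomposition {V : Type*} [AddCommGroup V] [Module ℝ V]
    [FiniteDimensional ℝ V]
    (γ : LinearMap.BilinForm ℝ V) (hγsym : ∀ X Y : V, γ X Y = γ Y X)
    (ℓ : Module.Dual ℝ V) (ℓ2 : ℝ)
    (P : LinearMap.BilinForm ℝ (Module.Dual ℝ V)) (hPsym : ∀ α β, P α β = P β α)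
    (n : V) (n2 : ℝ) (hn2 : n2 = 0)
    (h1 : γ n + n2 • ℓ = 0)
    (h2 : ℓ n + n2 * ℓ2 = 1)
    (h3 : Pvec P ℓ + ℓ2 • n = 0)
    (h4 : ∀ X : V, Pvec P (γ X) + ℓ X • n = X)
    (S : Submodule ℝ V)
    (hcodim : Module.finrank ℝ S + 1 = Module.finrank ℝ V) (hnS : n ∉ S)
    (Y : LinearMap.BilinForm ℝ V) (hYsym : ∀ X Z : V, Y X Z = Y Z X) :
    (∃! lsharp : S, ∀ x : S, γ (lsharp : V) (x : V) = ℓ (x : V)) ∧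
    (∃! F : S →ₗ[ℝ] S, ∀ x y : S, γ (F x : V) (y : V) = Y (x : V) (y : V)) ∧
    (∀ (lsharp : S), (∀ x : S, γ (lsharp : V) (x : V) = ℓ (x : V)) →
      ∀ F : S →ₗ[ℝ] S, (∀ x y : S, γ (F x : V) (y : V) = Y (x : V) (y : V)) →
        trP P Y = LinearMap.trace ℝ S F - 2 * Y n (lsharp : V)
          + (-(Y n n)) * (ℓ2 - ℓ (lsharp : V))) :=
  trP_Y_decomposition_general γ hγsym ℓ ℓ2 P n n2 hn2 h1 h2 h3 h4 S hcodim hnS Y hYsym
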